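/- Let E be a Dedekind complete Riesz space and (f_n) a sequence in E that order converges to 0. Then the Cesàro averages of the absolute values, (1/n)·∑_{k=0}^{n-1} |f_k|, order converge to 0 as n → ∞. -/

import Mathlib

open Finset

section Defs

variable {E : Type*} [ConditionallyCompleteLattice E] [AddCommGroup E] [Module ℝ E]
  [CovariantClass E E (· + ·) (· ≤ ·)]

/-- Order convergence of a sequence: there is a sequence `u ↓ 0` dominating the tails. -/
def OrderConvergesTo (f : ℕ → E) (x : E) : Prop :=
  ∃ u : ℕ → E, Antitone u ∧ IsGLB (Set.range u) (0 : E) ∧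
    ∀ m : ℕ, ∃ N : ℕ, ∀ n ≥ N, |f n - x| ≤ u m

/-- `p` is a component of `e`. -/
def IsComponent (e p : E) : Prop := 0 ≤ p ∧ p ≤ e ∧ p ⊓ (e - p) = 0

/-- A sequence of components is of density zero if its Cesàro means order converge to `0`. -/
def DensityZero (p : ℕ → E) : Prop :=
  OrderConvergesTo (fun n => (n : ℝ)⁻¹ • ∑ k ∈ Finset.range n, p k) (0 : E)

/-- The band projection (onto the band generated by `p`) applied to a positive element `f`. -/
noncomputable def bandProj (p f : E) : E :=
  sSup (Set.range fun n : ℕ => f ⊓ (n : ℝ) • p)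

end Defs

section Systems

variable (E : Type*) [ConditionallyCompleteLattice E] [AddCommGroup E] [Module ℝ E]
  [CovariantClass E E (· + ·) (· ≤ ·)]

/-- The data of a conditional expectation preserving system, without the
intertwining identity `T S = T`: a Dedekind complete Riesz space with weak order unit `e`,
the `f`-algebra multiplication of `E_e` (with unit `e`), a strictly-positive-free
conditional expectation operator `T` with `T e = e`, and a Riesz homomorphism `S`
with `S e = e`. -/
structure PreCEPS where
  e : E
  e_pos : 0 < e
  weakUnit : ∀ x : E, e ⊓ |x| = 0 → x = 0
  /-- the `f`-algebra multiplication (of the ideal generated by `e`) -/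
  mul : E →ₗ[ℝ] E →ₗ[ℝ] E
  mul_comm' : ∀ x y, mul x y = mul y x
  mul_pos' : ∀ x y, 0 ≤ x → 0 ≤ y → 0 ≤ mul x y
  one_mul' : ∀ x, mul e x = x
  finf' : ∀ x y z, x ⊓ y = 0 → 0 ≤ z → (mul x z) ⊓ y = 0
  /-- the conditional expectation operator -/
  T : E →ₗ[ℝ] E
  T_pos : ∀ x, 0 ≤ x → 0 ≤ T x
  T_proj : ∀ x, T (T x) = T x
  T_e : T e = e
  T_oc : ∀ (s : Set E) (x : E), s.Nonempty → DirectedOn (· ≤ ·) s → IsLUB s x →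
    IsLUB (T '' s) (T x)
  T_range_closed : ∀ (s : Set E) (x : E), (∀ y ∈ s, T y = y) → IsLUB s x → T x = x
  /-- the Riesz homomorphism -/
  S : E →ₗ[ℝ] E
  S_sup : ∀ x y, S (x ⊔ y) = S x ⊔ S y
  S_e : S e = e

/-- A conditional expectation preserving system. -/
structure CEPS extends PreCEPS E where
  TS : ∀ x, T (S x) = T x

variable {E}

/-- Strict positivity of the conditional expectation operator of a system. -/
def CEPS.StrictPos (A : CEPS E) : Prop := ∀ x : E, 0 ≤ x → A.T x = 0 → x = 0

/-- Ergodicity, characterised by Cesàro convergence of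
`T((S^k p)·q)` to `Tp·Tq` for all components `p, q` of `e`. -/
def CEPS.Ergodic (A : CEPS E) : Prop :=
  ∀ p q : E, IsComponent A.e p → IsComponent A.e q →
    OrderConvergesTo
      (fun n => (n : ℝ)⁻¹ • ∑ k ∈ Finset.range n, A.T (A.mul ((A.S ^ k) p) q))
      (A.mul (A.T p) (A.T q))

/-- Conditional weak mixing. -/
def CEPS.WeakMixing (A : CEPS E) : Prop :=
  ∀ p q : E, IsComponent A.e p → IsComponent A.e q →
    OrderConvergesTo
      (fun n => (n : ℝ)⁻¹ • ∑ k ∈ Finset.range n,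
        |A.T (A.mul ((A.S ^ k) p) q) - A.mul (A.T p) (A.T q)|) (0 : E)

end Systems

section Tensor

variable {E F G : Type*}
  [ConditionallyCompleteLattice E] [AddCommGroup E] [Module ℝ E]
  [CovariantClass E E (· + ·) (· ≤ ·)]
  [ConditionallyCompleteLattice F] [AddCommGroup F] [Module ℝ F]
  [CovariantClass F F (· + ·) (· ≤ ·)]
  [ConditionallyCompleteLattice G] [AddCommGroup G] [Module ℝ G]
  [CovariantClass G G (· + ·) (· ≤ ·)]

/-- A realisation of the Dedekind completion of the Fremlin tensor product of the
underlying spaces of two conditional expectation preserving systems, carrying the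
pre-system structure (Grobler's tensor product conditional expectation and the tensor
product Riesz homomorphism), but without the intertwining identity for the product. -/
structure TensorPreCEPS (A : CEPS E) (B : CEPS F) (G : Type*)
    [ConditionallyCompleteLattice G] [AddCommGroup G] [Module ℝ G]
    [CovariantClass G G (· + ·) (· ≤ ·)] where
  sys : PreCEPS G
  tmul : E →ₗ[ℝ] F →ₗ[ℝ] G
  tmul_pos : ∀ x y, 0 ≤ x → 0 ≤ y → 0 ≤ tmul x y
  e_def : sys.e = tmul A.e B.e
  T_tmul : ∀ x y, sys.T (tmul x y) = tmul (A.T x) (B.T y)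
  S_tmul : ∀ x y, sys.S (tmul x y) = tmul (A.S x) (B.S y)
  mul_tmul : ∀ x y x' y',
    sys.mul (tmul x y) (tmul x' y') = tmul (A.mul x x') (B.mul y y')
  comp_dense : ∀ u : G, IsComponent sys.e u →
    IsLUB {w : G | ∃ p q, IsComponent A.e p ∧ IsComponent B.e q ∧
      tmul p q ≤ u ∧ w = tmul p q} u
  tmul_oc_left : ∀ (x : ℕ → E) (a : E) (y : F), 0 ≤ y →
    OrderConvergesTo x a → OrderConvergesTo (fun n => tmul (x n) y) (tmul a y)
  tmul_oc_right : ∀ (x : E) (y : ℕ → F) (b : F), 0 ≤ x →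
    OrderConvergesTo y b → OrderConvergesTo (fun n => tmul x (y n)) (tmul x b)

/-- As `TensorPreCEPS`, but where the tensor product system is a full conditional
expectation preserving system. -/
structure TensorCEPS (A : CEPS E) (B : CEPS F) (G : Type*)
    [ConditionallyCompleteLattice G] [AddCommGroup G] [Module ℝ G]
    [CovariantClass G G (· + ·) (· ≤ ·)] where
  sys : CEPS G
  tmul : E →ₗ[ℝ] F →ₗ[ℝ] G
  tmul_pos : ∀ x y, 0 ≤ x → 0 ≤ y → 0 ≤ tmul x y
  e_def : sys.e = tmul A.e B.e
  T_tmul : ∀ x y, sys.T (tmul x y) = tmul (A.T x) (B.T y)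
  S_tmul : ∀ x y, sys.S (tmul x y) = tmul (A.S x) (B.S y)
  mul_tmul : ∀ x y x' y',
    sys.mul (tmul x y) (tmul x' y') = tmul (A.mul x x') (B.mul y y')
  comp_dense : ∀ u : G, IsComponent sys.e u →
    IsLUB {w : G | ∃ p q, IsComponent A.e p ∧ IsComponent B.e q ∧
      tmul p q ≤ u ∧ w = tmul p q} u
  tmul_oc_left : ∀ (x : ℕ → E) (a : E) (y : F), 0 ≤ y →
    OrderConvergesTo x a → OrderConvergesTo (fun n => tmul (x n) y) (tmul a y)
  tmul_oc_right : ∀ (x : E) (y : ℕ → F) (b : F), 0 ≤ x →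
    OrderConvergesTo y b → OrderConvergesTo (fun n => tmul x (y n)) (tmul x b)

end Tensor


/-!
Let `u m ↓ 0` with `|f k| ≤ u m` for `k ≥ N m`. Splitting the sum at `N 0` and at `N m` gives
`∑_{k<n} |f k| ≤ (N m + 1) • g + n • u m` with `g = ∑_{k<N 0} |f k| + u 0`, so the Cesàro mean is
at most `u m + (m + 1)⁻¹ • g` once `n ≥ (m + 1) (N m + 1)`. This bound decreases to `0` because a
Dedekind complete lattice-ordered group is Archimedean.

The hypotheses do not make the real scalar action monotone, so only rational scalars are compared;
their action is monotone because a lattice-ordered group is unperforated (`0 ≤ n • a → 0 ≤ a`).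
-/

section LatticeOrderedGroup

variable {E : Type*} [Lattice E] [AddCommGroup E] [AddLeftMono E] {a b c : E}

lemma inf_add_le_inf_add_inf (ha : 0 ≤ a) (hb : 0 ≤ b) (hc : 0 ≤ c) :
    a ⊓ (b + c) ≤ a ⊓ b + a ⊓ c := by
  have hle : a ⊓ (b + c) ≤ a ⊓ b + c := by
    rw [inf_add]
    exact le_inf (inf_le_left.trans (le_add_of_nonneg_right hc)) inf_le_right
  calc a ⊓ (b + c) ≤ (a ⊓ b + a) ⊓ (a ⊓ b + c) :=
        le_inf (inf_le_left.trans (le_add_of_nonneg_left (le_inf ha hb))) hle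
    _ = a ⊓ b + a ⊓ c := (add_inf a c (a ⊓ b)).symm

lemma inf_nsmul_eq_zero_of_inf_eq_zero (ha : 0 ≤ a) (hb : 0 ≤ b) (hab : a ⊓ b = 0) :
    ∀ n : ℕ, a ⊓ n • b = 0
  | 0 => by rw [zero_smul, inf_eq_right.2 ha]
  | n + 1 => by
    refine le_antisymm ?_ (le_inf ha (nsmul_nonneg hb _))
    calc a ⊓ (n + 1) • b ≤ a ⊓ n • b + a ⊓ b :=
          succ_nsmul b n ▸ inf_add_le_inf_add_inf ha (nsmul_nonneg hb n) hb
      _ = 0 := by rw [inf_nsmul_eq_zero_of_inf_eq_zero ha hb hab n, hab, add_zero]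

lemma nonneg_of_nsmul_nonneg {n : ℕ} (hn : n ≠ 0) (h : 0 ≤ n • a) : 0 ≤ a := by
  have hdisj : a⁻ ⊓ n • a⁺ = 0 := inf_nsmul_eq_zero_of_inf_eq_zero (negPart_nonneg a)
    (posPart_nonneg a) (by rw [inf_comm, posPart_inf_negPart_eq_zero]) n
  have hneg_le : a⁻ ≤ n • a⁺ :=
    calc a⁻ ≤ n • a⁻ := le_self_nsmul (negPart_nonneg a) hn
      _ ≤ n • a⁺ := by rwa [← sub_nonneg, ← nsmul_sub, posPart_sub_negPart]
  rw [← negPart_eq_zero, ← hdisj, inf_eq_left.2 hneg_le]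

end LatticeOrderedGroup

section RationalScalars

variable {𝕜 E : Type*} [DivisionRing 𝕜] [CharZero 𝕜]
  [Lattice E] [AddCommGroup E] [AddLeftMono E] [Module 𝕜 E] {x y : E}

lemma ratCast_smul_nonneg {q : ℚ} (hq : 0 ≤ q) (hx : 0 ≤ x) : 0 ≤ (q : 𝕜) • x := by
  refine nonneg_of_nsmul_nonneg q.den_ne_zero ?_
  rw [← Nat.cast_smul_eq_nsmul 𝕜, smul_smul, ← Rat.cast_natCast, ← Rat.cast_mul, mul_comm,
    Rat.mul_den_eq_num, Rat.cast_intCast, Int.cast_smul_eq_zsmul]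
  exact zsmul_nonneg hx (Rat.num_nonneg.2 hq)

lemma ratCast_smul_le_ratCast_smul {p q : ℚ} (hpq : p ≤ q) (hx : 0 ≤ x) :
    (p : 𝕜) • x ≤ (q : 𝕜) • x := by
  have := ratCast_smul_nonneg (𝕜 := 𝕜) (sub_nonneg.2 hpq) hx
  rwa [Rat.cast_sub, sub_smul, sub_nonneg] at this

lemma ratCast_smul_le_ratCast_smul_of_le {q : ℚ} (hq : 0 ≤ q) (hxy : x ≤ y) :
    (q : 𝕜) • x ≤ (q : 𝕜) • y := by
  have := ratCast_smul_nonneg (𝕜 := 𝕜) hq (sub_nonneg.2 hxy)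
  rwa [smul_sub, sub_nonneg] at this

lemma inv_natCast_smul_nonneg (hx : 0 ≤ x) (n : ℕ) : 0 ≤ (n : 𝕜)⁻¹ • x := by
  have := ratCast_smul_nonneg (𝕜 := 𝕜) (q := (n : ℚ)⁻¹) (by positivity) hx
  push_cast at this
  exact this

lemma antitone_inv_succ_smul (hx : 0 ≤ x) : Antitone fun m : ℕ => ((m : 𝕜) + 1)⁻¹ • x := by
  intro m n hmn
  have := ratCast_smul_le_ratCast_smul (𝕜 := 𝕜) (p := ((n : ℚ) + 1)⁻¹) (q := ((m : ℚ) + 1)⁻¹)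
    (by gcongr) hx
  push_cast at this
  exact this

end RationalScalars

lemma nonpos_of_forall_nsmul_le {E : Type*} [ConditionallyCompleteLattice E] [AddCommGroup E]
    [AddLeftMono E] {g h : E} (H : ∀ n : ℕ, n • h ≤ g) : h ≤ 0 := by
  set s := sSup (Set.range fun n : ℕ => n • h)
  have hbdd : BddAbove (Set.range fun n : ℕ => n • h) := ⟨g, Set.forall_mem_range.2 H⟩
  have hs : s ≤ s - h := csSup_le (Set.range_nonempty _) <| Set.forall_mem_range.2 fun n =>
    le_sub_iff_add_le.2 <| succ_nsmul h n ▸ le_csSup hbdd ⟨n + 1, rfl⟩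
  simpa using hs

lemma Antitone.isGLB_range_add {ι E : Type*} [SemilatticeSup ι] [AddCommGroup E] [PartialOrder E]
    [AddLeftMono E] {u v : ι → E} {a b : E} (hu : Antitone u) (hv : Antitone v)
    (hua : IsGLB (Set.range u) a) (hvb : IsGLB (Set.range v) b) :
    IsGLB (Set.range (u + v)) (a + b) := by
  refine ⟨Set.forall_mem_range.2 fun i => add_le_add (hua.1 ⟨i, rfl⟩) (hvb.1 ⟨i, rfl⟩), ?_⟩
  intro h hh
  have hsub : ∀ j, h - v j ≤ a := fun j => hua.2 <| Set.forall_mem_range.2 fun i =>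
    calc h - v j ≤ u (i ⊔ j) + v (i ⊔ j) - v j := sub_le_sub_right (hh ⟨i ⊔ j, rfl⟩) _
      _ ≤ u i + v j - v j := sub_le_sub_right (add_le_add (hu le_sup_left) (hv le_sup_right)) _
      _ = u i := add_sub_cancel_right _ _
  exact sub_le_iff_le_add'.1 <| hvb.2 <| Set.forall_mem_range.2 fun j =>
    sub_le_comm.1 (hsub j)

section InverseMultiples

variable {𝕜 E : Type*} [DivisionRing 𝕜] [CharZero 𝕜]
  [ConditionallyCompleteLattice E] [AddCommGroup E] [AddLeftMono E] [Module 𝕜 E] {g : E}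

lemma isGLB_range_inv_succ_smul (hg : 0 ≤ g) :
    IsGLB (Set.range fun m : ℕ => ((m : 𝕜) + 1)⁻¹ • g) 0 := by
  refine ⟨Set.forall_mem_range.2 fun m => ?_,
    fun h hh => nonpos_of_forall_nsmul_le (g := g) fun n => ?_⟩
  · exact_mod_cast inv_natCast_smul_nonneg (𝕜 := 𝕜) hg (m + 1)
  · rcases n with _ | m
    · simpa using hg
    calc (m + 1) • h ≤ (m + 1) • (((m : 𝕜) + 1)⁻¹ • g) := nsmul_le_nsmul_right (hh ⟨m, rfl⟩) _
      _ = g := by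
        rw [← Nat.cast_smul_eq_nsmul 𝕜, smul_smul, Nat.cast_succ,
          mul_inv_cancel₀ (Nat.cast_add_one_ne_zero m), one_smul]

end InverseMultiples

section PartialSums

variable {E : Type*} [AddCommMonoid E] [PartialOrder E] [AddLeftMono E] {a : ℕ → E} {b : E}

lemma sum_range_le_sum_range_add_nsmul {N : ℕ} (ha : ∀ k, 0 ≤ a k) (hb : ∀ k ≥ N, a k ≤ b)
    (n : ℕ) : ∑ k ∈ range n, a k ≤ ∑ k ∈ range N, a k + n • b := by
  rw [← sum_filter_add_sum_filter_not (range n) (· < N)]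
  refine add_le_add (sum_le_sum_of_subset_of_nonneg (fun k hk => ?_) fun k _ _ => ha k) ?_
  · simp only [mem_filter, mem_range] at hk ⊢
    exact hk.2
  · calc ∑ k ∈ range n with ¬k < N, a k ≤ #{k ∈ range n | ¬k < N} • b :=
          sum_le_card_nsmul _ _ _ fun k hk => hb k (not_lt.1 (mem_filter.1 hk).2)
      _ ≤ n • b := nsmul_le_nsmul_left ((ha N).trans (hb N le_rfl))
          ((card_filter_le _ _).trans (card_range n).le)

lemma sum_range_le_succ_nsmul_add_nsmul {N₀ M : ℕ} {b₀ : E} (ha : ∀ k, 0 ≤ a k)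
    (hb₀ : ∀ k ≥ N₀, a k ≤ b₀) (hb : ∀ k ≥ M, a k ≤ b) (n : ℕ) :
    ∑ k ∈ range n, a k ≤ (M + 1) • (∑ k ∈ range N₀, a k + b₀) + n • b :=
  calc ∑ k ∈ range n, a k ≤ ∑ k ∈ range M, a k + n • b := sum_range_le_sum_range_add_nsmul ha hb n
    _ ≤ ∑ k ∈ range N₀, a k + M • b₀ + n • b :=
        add_le_add_left (sum_range_le_sum_range_add_nsmul ha hb₀ M) _
    _ ≤ (M + 1) • (∑ k ∈ range N₀, a k + b₀) + n • b := by
        rw [nsmul_add]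
        exact add_le_add_left
          (add_le_add (le_self_nsmul (sum_nonneg fun k _ => ha k) M.succ_ne_zero)
            (nsmul_le_nsmul_left ((ha N₀).trans (hb₀ N₀ le_rfl)) M.le_succ)) _

end PartialSums

lemma inv_natCast_smul_le_of_le_succ_nsmul_add_nsmul {𝕜 E : Type*} [DivisionRing 𝕜] [CharZero 𝕜]
    [Lattice E] [AddCommGroup E] [AddLeftMono E] [Module 𝕜 E] {s g b : E} {M m n : ℕ}
    (hg : 0 ≤ g) (hs : s ≤ (M + 1) • g + n • b) (hn : (m + 1) * (M + 1) ≤ n) :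
    (n : 𝕜)⁻¹ • s ≤ ((m : 𝕜) + 1)⁻¹ • g + b := by
  have hn_pos : 0 < n := lt_of_lt_of_le (by positivity) hn
  have hcoeff : (n : ℚ)⁻¹ * (M + 1) ≤ ((m : ℚ) + 1)⁻¹ := by
    rw [inv_mul_le_iff₀ (by exact_mod_cast hn_pos), ← div_eq_mul_inv,
      le_div_iff₀ (by positivity)]
    exact_mod_cast Nat.mul_comm (m + 1) (M + 1) ▸ hn
  have := ratCast_smul_le_ratCast_smul (𝕜 := 𝕜) hcoeff hg
  push_cast at this
  calc (n : 𝕜)⁻¹ • s ≤ (n : 𝕜)⁻¹ • ((M + 1) • g + n • b) := by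
        have := ratCast_smul_le_ratCast_smul_of_le (𝕜 := 𝕜) (q := (n : ℚ)⁻¹) (by positivity) hs
        push_cast at this
        exact this
    _ = ((n : 𝕜)⁻¹ * ((M : 𝕜) + 1)) • g + b := by
        rw [smul_add, ← Nat.cast_smul_eq_nsmul 𝕜, ← Nat.cast_smul_eq_nsmul 𝕜 n, smul_smul,
          smul_smul, inv_mul_cancel₀ (Nat.cast_ne_zero.2 hn_pos.ne'), one_smul, Nat.cast_succ]
    _ ≤ ((m : 𝕜) + 1)⁻¹ • g + b := add_le_add_left this _

/-- if `(f_n)` order converges to `0` in a Dedekind complete Riesz space,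
then the Cesàro averages of `|f_n|` order converge to `0`. -/
theorem cesaro_abs_of_orderConvergesTo_zero
    {E : Type*} [ConditionallyCompleteLattice E] [AddCommGroup E] [Module ℝ E]
    [CovariantClass E E (· + ·) (· ≤ ·)]
    (f : ℕ → E) (hf : OrderConvergesTo f (0 : E)) :
    OrderConvergesTo (fun n => (n : ℝ)⁻¹ • ∑ k ∈ Finset.range n, |f k|) (0 : E) := by
  obtain ⟨u, hu_anti, hu_glb, hu⟩ := hf
  choose N hN using hu
  simp only [sub_zero] at hN
  set g := ∑ k ∈ range (N 0), |f k| + u 0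
  have hg : 0 ≤ g := add_nonneg (sum_nonneg fun k _ => abs_nonneg _) (hu_glb.1 ⟨0, rfl⟩)
  have hv := antitone_inv_succ_smul (𝕜 := ℝ) hg
  refine ⟨u + fun m : ℕ => ((m : ℝ) + 1)⁻¹ • g, hu_anti.add hv,
    by simpa using hu_anti.isGLB_range_add hv hu_glb (isGLB_range_inv_succ_smul hg),
    fun m => ⟨(m + 1) * (N m + 1), fun n hn => ?_⟩⟩
  rw [sub_zero, abs_of_nonneg (inv_natCast_smul_nonneg (sum_nonneg fun k _ => abs_nonneg _) n),
    Pi.add_apply, add_comm]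
  exact inv_natCast_smul_le_of_le_succ_nsmul_add_nsmul hg
    (sum_range_le_succ_nsmul_add_nsmul (fun k => abs_nonneg _) (hN 0) (hN m) n) hn
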